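/- Let X be a pre-Riesz space and let A₁, …, A_m ⊆ X be subsets such that every element of A_i is disjoint to every element of A_j whenever i ≠ j. For each j ∈ {1, …, m}, let (x_{j,1}, …, x_{j,n_j}) be a linearly independent system of vectors in A_j. Then the combined system (x_{1,1}, …, x_{1,n_1}, …, x_{m,1}, …, x_{m,n_m}) is linearly independent over ℝ. -/

import Mathlib

/-!
In a pre-Riesz space, `x ⊥ z` forces `|x| ∧ |z| = 0` in the Dedekind completion: every common
lower bound of the upper bounds of `±x` and of `±z` is `≤ 0` (`RieszDisjoint x z`). Unlike `⊥`,
this relation is visibly linear in each argument, so it passes from the `A_j` to their spans,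
and `RieszDisjoint x x` forces `x = 0`. Hence the spans of the `A_j` are independent subspaces,
and linearly independent families in independent subspaces concatenate to a linearly
independent family.
-/

open Pointwise

/-- The former Mathlib class `OrderedSMul`, removed from Mathlib, restated with its old meaning. -/
class OrderedSMul (R M : Type*) [Semiring R] [PartialOrder R] [IsOrderedRing R] [AddCommMonoid M]
    [PartialOrder M] [IsOrderedAddMonoid M] [SMulWithZero R M] : Prop where
  protected smul_lt_smul_of_pos : ∀ {a b : M} {c : R}, a < b → 0 < c → c • a < c • b
  protected lt_of_smul_lt_smul_of_pos : ∀ {a b : M} {c : R}, c • a < c • b → 0 < c → a < b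

variable {X : Type*} [AddCommGroup X] [PartialOrder X] [IsOrderedAddMonoid X] [Module ℝ X] [OrderedSMul ℝ X]

/-- Two elements of an ordered vector space are disjoint if the sets `{x+y, -x-y}` and
`{x-y, y-x}` have the same set of upper bounds. -/
def UDisjoint (x y : X) : Prop :=
  upperBounds ({x + y, -x - y} : Set X) = upperBounds ({x - y, y - x} : Set X)

/-- The disjoint complement `S^⊥` of a set `S`. -/
def dComp (S : Set X) : Set X := {x : X | ∀ s ∈ S, UDisjoint x s}

/-- A band: a set equal to its double disjoint complement. -/
def IsBand (B : Set X) : Prop := B = dComp (dComp B)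

/-- A projection band: a band `B` with `B ∩ B^⊥ = {0}` and `B + B^⊥ = X`. -/
def IsProjBand (B : Set X) : Prop :=
  IsBand B ∧ B ∩ dComp B = {0} ∧ ∀ x : X, ∃ b ∈ B, ∃ c ∈ dComp B, x = b + c

/-- A positive linear operator. -/
def IsPosMap (T : X →ₗ[ℝ] X) : Prop := ∀ x : X, 0 ≤ x → 0 ≤ T x

/-- A band projection: a linear projection whose range is a projection band and whose
kernel is the disjoint complement of the range. -/
def IsBandProj (P : X →ₗ[ℝ] X) : Prop :=
  P ∘ₗ P = P ∧ IsProjBand (Set.range ⇑P) ∧ (LinearMap.ker P : Set X) = dComp (Set.range ⇑P)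

/-- A pre-Riesz space: for every nonempty finite `A ⊆ X` and every `x`, if the upper bounds
of `x + A` are contained in the upper bounds of `A`, then `x ≥ 0`. -/
def IsPreRiesz (X : Type*) [AddCommGroup X] [PartialOrder X] [IsOrderedAddMonoid X] [Module ℝ X]
    [OrderedSMul ℝ X] : Prop :=
  ∀ (A : Set X) (x : X), A.Finite → A.Nonempty →
    upperBounds ((x + ·) '' A) ⊆ upperBounds A → 0 ≤ x

instance : PosSMulStrictMono ℝ X :=
  ⟨fun _ hc _ _ h => OrderedSMul.smul_lt_smul_of_pos h hc⟩

section OrderedGroup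

variable {E : Type*} [AddCommGroup E] [PartialOrder E] {x z u v w : E}

def absUpperBounds (x : E) : Set E := upperBounds {x, -x}

lemma mem_absUpperBounds : w ∈ absUpperBounds x ↔ x ≤ w ∧ -x ≤ w := by
  simp [absUpperBounds, upperBounds_insert]

lemma absUpperBounds_neg (x : E) : absUpperBounds (-x) = absUpperBounds x := by
  simp [absUpperBounds, Set.pair_comm]

lemma uDisjoint_iff : UDisjoint x z ↔ absUpperBounds (x + z) = absUpperBounds (x - z) := by
  rw [UDisjoint, absUpperBounds, absUpperBounds, neg_add', neg_sub]

def RieszDisjoint (x z : E) : Prop :=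
  ∀ v ∈ lowerBounds (absUpperBounds x), v ∈ lowerBounds (absUpperBounds z) → v ≤ 0

lemma RieszDisjoint.symm (h : RieszDisjoint x z) : RieszDisjoint z x :=
  fun v hx hz => h v hz hx

lemma rieszDisjoint_zero_right (x : E) : RieszDisjoint x 0 :=
  fun _ _ hv => hv (mem_absUpperBounds.mpr ⟨le_rfl, neg_zero.le⟩)

variable [IsOrderedAddMonoid E]

lemma add_mem_absUpperBounds {w₁ w₂ z₁ z₂ : E} (h₁ : w₁ ∈ absUpperBounds z₁)
    (h₂ : w₂ ∈ absUpperBounds z₂) : w₁ + w₂ ∈ absUpperBounds (z₁ + z₂) := by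
  rw [mem_absUpperBounds] at *
  exact ⟨add_le_add h₁.1 h₂.1, neg_add z₁ z₂ ▸ add_le_add h₁.2 h₂.2⟩

lemma RieszDisjoint.eq_zero_of_self (h : RieszDisjoint x x) : x = 0 := by
  have hx : x ∈ lowerBounds (absUpperBounds x) := fun _ hw => (mem_absUpperBounds.mp hw).1
  have hx' : -x ∈ lowerBounds (absUpperBounds x) := fun _ hw => (mem_absUpperBounds.mp hw).2
  exact le_antisymm (h x hx hx) (neg_nonpos.mp (h (-x) hx' hx'))

lemma le_of_le_of_sub_eq_sub {a b c d : E} (h : a ≤ b) (e : b - a = d - c) : c ≤ d :=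
  sub_nonneg.mp (e ▸ sub_nonneg.mpr h)

lemma mem_absUpperBounds_of_add_mem (hv : v ∈ lowerBounds (absUpperBounds z))
    (hadd : u + v ∈ absUpperBounds (x + z)) (hsub : u + v ∈ absUpperBounds (x - z)) :
    u ∈ absUpperBounds x := by
  rw [mem_absUpperBounds] at hadd hsub
  have h₁ : u + v - x ∈ absUpperBounds z := mem_absUpperBounds.mpr
    ⟨le_of_le_of_sub_eq_sub hadd.1 (by abel), le_of_le_of_sub_eq_sub hsub.1 (by abel)⟩
  have h₂ : u + v + x ∈ absUpperBounds z := mem_absUpperBounds.mpr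
    ⟨le_of_le_of_sub_eq_sub hsub.2 (by abel), le_of_le_of_sub_eq_sub hadd.2 (by abel)⟩
  exact mem_absUpperBounds.mpr
    ⟨le_of_le_of_sub_eq_sub (hv h₁) (by abel), le_of_le_of_sub_eq_sub (hv h₂) (by abel)⟩

variable [Module ℝ E] [PosSMulMono ℝ E]

lemma smul_le_smul_of_abs_le (hx : x ≤ w) (hx' : -x ≤ w) {c t : ℝ} (hct : |c| ≤ t) :
    c • x ≤ t • w := by
  obtain ⟨hc₁, hc₂⟩ := abs_le.mp hct
  calc c • x = ((t + c) / 2) • x + ((t - c) / 2) • -x := by module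
    _ ≤ ((t + c) / 2) • w + ((t - c) / 2) • w := by
        gcongr
        all_goals linarith
    _ = t • w := by module

lemma smul_mem_absUpperBounds (hw : w ∈ absUpperBounds x) {c t : ℝ} (hct : |c| ≤ t) :
    t • w ∈ absUpperBounds (c • x) := by
  obtain ⟨hx, hx'⟩ := mem_absUpperBounds.mp hw
  refine mem_absUpperBounds.mpr ⟨smul_le_smul_of_abs_le hx hx' hct, ?_⟩
  rw [← neg_smul]
  exact smul_le_smul_of_abs_le hx hx' (by rwa [abs_neg])

lemma nonneg_of_mem_absUpperBounds (hw : w ∈ absUpperBounds x) : 0 ≤ w := by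
  obtain ⟨hx, hx'⟩ := mem_absUpperBounds.mp hw
  simpa using smul_le_smul_of_abs_le hx hx' (c := 0) (t := 1) (by simp)

lemma RieszDisjoint.add_right {z₁ z₂ : E} (h₁ : RieszDisjoint x z₁) (h₂ : RieszDisjoint x z₂) :
    RieszDisjoint x (z₁ + z₂) := by
  intro v hvx hvz
  refine h₂ v hvx fun w₂ hw₂ => sub_nonpos.mp (h₁ (v - w₂) ?_ ?_)
  · intro w hw
    exact sub_le_iff_le_add.mpr
      ((hvx hw).trans (le_add_of_nonneg_right (nonneg_of_mem_absUpperBounds hw₂)))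
  · exact fun w hw => sub_le_iff_le_add.mpr (hvz (add_mem_absUpperBounds hw hw₂))

/-- Compare `v` with `t • w` for `t = |c| + 1`: this bounds `±x` when `w` does, and bounds
`±c • z` when `w` bounds `±z`. -/
lemma RieszDisjoint.smul_right (c : ℝ) (h : RieszDisjoint x z) : RieszDisjoint x (c • z) := by
  intro v hvx hvz
  set t := |c| + 1
  have ht : 0 < t := by positivity
  have hv : t⁻¹ • v ≤ 0 := by
    refine h _ (fun w hw => ?_) (fun w hw => ?_) <;> rw [inv_smul_le_iff_of_pos ht]
    · exact hvx (one_smul ℝ x ▸ smul_mem_absUpperBounds hw (by simp [t]))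
    · exact hvz (smul_mem_absUpperBounds hw (by simp [t]))
  exact nonpos_of_smul_nonpos_of_pos_left (by simpa [ht.ne'] using hv) (inv_pos.mpr ht)

def rieszDisjointSubmodule (x : E) : Submodule ℝ E where
  carrier := {z | RieszDisjoint x z}
  zero_mem' := rieszDisjoint_zero_right x
  add_mem' := RieszDisjoint.add_right
  smul_mem' c _ := RieszDisjoint.smul_right c

lemma RieszDisjoint.span {S T : Set E} (h : ∀ x ∈ S, ∀ z ∈ T, RieszDisjoint x z) :
    ∀ x ∈ Submodule.span ℝ S, ∀ z ∈ Submodule.span ℝ T, RieszDisjoint x z := by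
  have hS : ∀ z ∈ T, Submodule.span ℝ S ≤ rieszDisjointSubmodule z :=
    fun z hz => Submodule.span_le.mpr fun x hx => (h x hx z hz).symm
  intro x hx
  exact (Submodule.span_le (p := rieszDisjointSubmodule x)).mpr fun z hz => (hS z hz hx).symm

lemma linearIndependent_sigma_of_rieszDisjoint {ι : Type*} {κ : ι → Type*}
    {v : (i : ι) → κ i → E} (hli : ∀ i, LinearIndependent ℝ (v i))
    (hd : ∀ i j, i ≠ j → ∀ k l, RieszDisjoint (v i k) (v j l)) :
    LinearIndependent ℝ (fun p : Σ i, κ i => v p.1 p.2) := by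
  refine linearIndependent_iUnion_finite hli fun i t _ hit => Submodule.disjoint_def.mpr ?_
  intro x hx hxt
  have hspan : ⨆ j ∈ t, Submodule.span ℝ (Set.range (v j)) ≤ rieszDisjointSubmodule x := by
    refine iSup₂_le fun j hj z hz => RieszDisjoint.span ?_ x hx z hz
    rintro _ ⟨k, rfl⟩ _ ⟨l, rfl⟩
    exact hd i j (ne_of_mem_of_not_mem hj hit).symm k l
  exact RieszDisjoint.eq_zero_of_self (hspan hxt)

/-- `2u - (x + z)` bounds `±(x - z)`, hence by disjointness also `x + z`; similarly for
`2u + (x + z)` and `-(x + z)`. -/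
lemma UDisjoint.mem_absUpperBounds_add (hd : UDisjoint x z) (hx : u ∈ absUpperBounds x)
    (hz : u ∈ absUpperBounds z) : u ∈ absUpperBounds (x + z) := by
  obtain ⟨hx, hx'⟩ := mem_absUpperBounds.mp hx
  obtain ⟨hz, hz'⟩ := mem_absUpperBounds.mp hz
  have hsub : u + u - (x + z) ∈ absUpperBounds (x + z) := by
    rw [uDisjoint_iff.mp hd, mem_absUpperBounds]
    exact ⟨le_of_le_of_sub_eq_sub (add_le_add hx hx) (by abel),
      le_of_le_of_sub_eq_sub (add_le_add hz hz) (by abel)⟩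
  have hadd : u + u + (x + z) ∈ absUpperBounds (x + z) := by
    rw [uDisjoint_iff.mp hd, mem_absUpperBounds]
    exact ⟨le_of_le_of_sub_eq_sub (add_le_add hz' hz') (by abel),
      le_of_le_of_sub_eq_sub (add_le_add hx' hx') (by abel)⟩
  refine mem_absUpperBounds.mpr ⟨?_, ?_⟩ <;>
    refine le_of_smul_le_smul_of_pos_left (a := (2 : ℝ)) ?_ two_pos <;> rw [two_smul, two_smul]
  · exact le_of_le_of_sub_eq_sub (mem_absUpperBounds.mp hsub).1 (by abel)
  · exact le_of_le_of_sub_eq_sub (mem_absUpperBounds.mp hadd).2 (by abel)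

end OrderedGroup

lemma IsPreRiesz.nonneg_of_forall_mem_absUpperBounds (hX : IsPreRiesz X) {a y : X}
    (h : ∀ u, u - y ∈ absUpperBounds a → u ∈ absUpperBounds a) : 0 ≤ y := by
  refine hX {a, -a} y (Set.toFinite _) (Set.insert_nonempty _ _) fun u hu => h u ?_
  rw [Set.image_pair, upperBounds_insert, upperBounds_singleton] at hu
  exact mem_absUpperBounds.mpr ⟨le_sub_iff_add_le'.mpr hu.1, le_sub_iff_add_le'.mpr hu.2⟩

/-- Apply the pre-Riesz property to `{x + z, -(x + z)}` shifted by `-v`: an upper bound of the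
shifted set bounds `±x` and `±z` because `v` lies below their upper bounds, hence it bounds
`±(x + z)` by disjointness. -/
lemma UDisjoint.rieszDisjoint (hX : IsPreRiesz X) {x z : X} (hd : UDisjoint x z) :
    RieszDisjoint x z := by
  intro v hvx hvz
  refine neg_nonneg.mp (hX.nonneg_of_forall_mem_absUpperBounds (a := x + z) fun u hu => ?_)
  rw [sub_neg_eq_add] at hu
  have hu' : u + v ∈ absUpperBounds (x - z) := uDisjoint_iff.mp hd ▸ hu
  refine hd.mem_absUpperBounds_add (mem_absUpperBounds_of_add_mem hvz hu hu') ?_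
  refine mem_absUpperBounds_of_add_mem hvx (add_comm x z ▸ hu) ?_
  rwa [← neg_sub, absUpperBounds_neg]

/-- If `A₁, …, A_m` are pairwise disjoint subsets and each `(x_{j,1}, …, x_{j,n_j})` is a
linearly independent system in `A_j`, then the combined system is linearly independent. -/
theorem stmt_14 (hX : IsPreRiesz X) {m : ℕ} (A : Fin m → Set X)
    (hA : ∀ i j, i ≠ j → ∀ a ∈ A i, ∀ b ∈ A j, UDisjoint a b)
    (n : Fin m → ℕ) (v : (j : Fin m) → Fin (n j) → X)
    (hv : ∀ j k, v j k ∈ A j) (hli : ∀ j, LinearIndependent ℝ (v j)) :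
    LinearIndependent ℝ (fun p : (Σ j : Fin m, Fin (n j)) => v p.1 p.2) :=
  linearIndependent_sigma_of_rieszDisjoint hli fun i j hij k l =>
    (hA i j hij _ (hv i k) _ (hv j l)).rieszDisjoint hX
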